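/- arXiv:2003.04026 — 2 statements merged into one kernel-verified Lean document; each statement's English description precedes it below -/
import Mathlib

section
/- Let P₁, P₂ be n×n orthogonal projection matrices onto subspaces S₁, S₂ with dim S₁ = p₁ ≥ p₂ = dim S₂ ≥ 1. The eigenvalues of P₁P₂ are: 1 with multiplicity s = dim(S₁ ∩ S₂), cos²θ_{s+i} for i = 1,…,r where θ_j ∈ (0, π/2) are the nonzero non-right principal angles between S₁ and S₂, and 0 with multiplicity n − s − r. Consequently tr(P₁P₂) = s + Σ_{i=1}^r cos²(θ_{s+i}). -/
/-!
Write `U`, `V` for the matrices whose rows are the principal vectors `u k`, `v k`, and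
`C = diag (u k ⬝ᵥ v k)`, so that `C² = diag (cos² θ k)`. Testing the maximality of a principal
pair against rotations in a plane through it shows `u i ⬝ᵥ v j = 0` for `i ≠ j` and
`P₁ v j = (u j ⬝ᵥ v j) • u j`. Since the `v k` are an orthonormal basis of `S₂`, `P₂ = Vᵀ V`,
hence `P₁ P₂ = Uᵀ C · V` while `V · Uᵀ C = C²`; the two products have the same trace and, up to a
factor `X ^ (n - p₂)`, the same characteristic polynomial. Finally `S₁ ⊓ S₂` is spanned by the
`v k` with `θ k = 0`: for `x` in it, the coordinates `y = V x` satisfy `y = C² y`.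
-/

open Matrix Polynomial

/-- `IsPrincipalAngles S₁ S₂ θ` : `θ : Fin p₂ → ℝ` is the (recursively defined) system of
principal angles between the subspaces `S₁` and `S₂` of ℝⁿ, witnessed by principal
vectors `u k ∈ S₁`, `v k ∈ S₂`. -/
structure IsPrincipalAngles {n p₂ : ℕ} (S₁ S₂ : Submodule ℝ (Fin n → ℝ))
    (θ : Fin p₂ → ℝ) (u v : Fin p₂ → (Fin n → ℝ)) : Prop where
  mem_u : ∀ k, u k ∈ S₁
  mem_v : ∀ k, v k ∈ S₂
  norm_u : ∀ k, u k ⬝ᵥ u k = 1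
  norm_v : ∀ k, v k ⬝ᵥ v k = 1
  ortho_u : ∀ i k, i < k → u i ⬝ᵥ u k = 0
  ortho_v : ∀ i k, i < k → v i ⬝ᵥ v k = 0
  angle_mem : ∀ k, θ k ∈ Set.Icc (0 : ℝ) (Real.pi / 2)
  cos_eq : ∀ k, Real.cos (θ k) = |u k ⬝ᵥ v k|
  maximal : ∀ k, ∀ u' ∈ S₁, ∀ v' ∈ S₂, u' ⬝ᵥ u' = 1 → v' ⬝ᵥ v' = 1 →
    (∀ i, i < k → u i ⬝ᵥ u' = 0 ∧ v i ⬝ᵥ v' = 0) → |u' ⬝ᵥ v'| ≤ Real.cos (θ k)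

theorem dotProduct_eq_zero_of_forall_abs_dotProduct_le {m : Type*} [Fintype m]
    {x y z : m → ℝ} (hy : y ⬝ᵥ y = 1) (hyz : y ⬝ᵥ z = 0)
    (hmax : ∀ a b : ℝ, (a • y + b • z) ⬝ᵥ (a • y + b • z) = 1 →
      |x ⬝ᵥ (a • y + b • z)| ≤ |x ⬝ᵥ y|) :
    x ⬝ᵥ z = 0 := by
  by_contra hxz
  have hz : 0 < z ⬝ᵥ z := by
    simpa using dotProduct_star_self_pos_iff.mpr (fun h : z = 0 => hxz (by simp [h]))
  have hzy : z ⬝ᵥ y = 0 := by rwa [dotProduct_comm]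
  have hnorm (a b : ℝ) : (a • y + b • z) ⬝ᵥ (a • y + b • z) = a ^ 2 + b ^ 2 * (z ⬝ᵥ z) := by
    simp only [dotProduct_add, add_dotProduct, dotProduct_smul, smul_dotProduct, smul_eq_mul,
      hy, hyz, hzy]
    ring
  have hval (a b : ℝ) : x ⬝ᵥ (a • y + b • z) = a * (x ⬝ᵥ y) + b * (x ⬝ᵥ z) := by
    simp only [dotProduct_add, dotProduct_smul, smul_eq_mul]
  set c := x ⬝ᵥ y
  set d := x ⬝ᵥ z
  set β := z ⬝ᵥ z
  set r := √(c ^ 2 + d ^ 2 / β)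
  have hr0 : 0 < r := Real.sqrt_pos.mpr (by positivity)
  have hr : β * r ^ 2 = c ^ 2 * β + d ^ 2 := by rw [Real.sq_sqrt (by positivity)]; field_simp
  -- the unit vector of `span {y, z}` best aligned with `x`; its dot product with `x` is `r`
  have key := hmax (c / r) (d / (β * r))
  rw [hnorm, hval] at key
  have hunit : (c / r) ^ 2 + (d / (β * r)) ^ 2 * β = 1 := by
    field_simp
    linear_combination -hr
  have hdot : c / r * c + d / (β * r) * d = r := by
    field_simp
    linear_combination -hr
  rw [hdot, abs_of_pos hr0] at key
  have hd : 0 < d ^ 2 := by positivity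
  have := mul_self_le_mul_self hr0.le (key hunit)
  nlinarith [abs_mul_abs_self c]

structure Matrix.IsOrthogonalProjection {R m : Type*} [CommRing R] [Fintype m]
    (P : Matrix m m R) (S : Submodule R (m → R)) : Prop where
  isSymm : P.IsSymm
  mulVec_mem : ∀ x, P *ᵥ x ∈ S
  mulVec_eq_self : ∀ x ∈ S, P *ᵥ x = x

section

variable {R m ι : Type*} [CommRing R] [Fintype m] [Fintype ι] [DecidableEq ι]

theorem Matrix.linearIndependent_row_of_mul_eq_one {V : Matrix ι m R} {W : Matrix m ι R}
    (h : V * W = 1) : LinearIndependent R V.row :=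
  Matrix.vecMul_injective_iff.mp fun a b hab => by
    simpa [vecMul_vecMul, h] using congrArg (· ᵥ* W) hab

theorem Matrix.IsSymm.dotProduct_mulVec_comm {P : Matrix m m R} (hP : P.IsSymm) (x y : m → R) :
    x ⬝ᵥ (P *ᵥ y) = (P *ᵥ x) ⬝ᵥ y := by
  rw [dotProduct_mulVec, ← mulVec_transpose, hP.eq]

theorem Matrix.IsOrthogonalProjection.eq_transpose_mul_self {S : Submodule R (m → R)}
    {P : Matrix m m R} {V : Matrix ι m R} (hP : P.IsOrthogonalProjection S) (hV : V * Vᵀ = 1)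
    (hspan : Submodule.span R (Set.range V.row) = S) : P = Vᵀ * V := by
  refine ext_iff_mulVec.mpr fun x => ?_
  obtain ⟨y, hy⟩ : P *ᵥ x ∈ LinearMap.range V.vecMulLinear := by
    rw [range_vecMulLinear, hspan]; exact hP.mulVec_mem x
  have hcoef : V *ᵥ (P *ᵥ x) = V *ᵥ x := funext fun i => by
    rw [mulVec, mulVec, hP.isSymm.dotProduct_mulVec_comm,
      hP.mulVec_eq_self _ (hspan ▸ Submodule.subset_span ⟨i, rfl⟩)]
  have hy' : P *ᵥ x = Vᵀ *ᵥ y := by rw [mulVec_transpose, ← hy]; rfl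
  have : y = V *ᵥ x := by
    rw [← hcoef, hy', mulVec_mulVec, hV, one_mulVec]
  rw [hy', this, mulVec_mulVec]

theorem Matrix.charpoly_mul_eq_of_mul_eq_diagonal [DecidableEq m] {A : Matrix m ι R}
    {B : Matrix ι m R} {d : ι → R} (h : B * A = diagonal d)
    (hle : Fintype.card ι ≤ Fintype.card m) :
    (A * B).charpoly = X ^ (Fintype.card m - Fintype.card ι) * ∏ j, (X - C (d j)) := by
  rw [charpoly_mul_comm_of_le _ _ hle, h, charpoly_diagonal]

theorem Matrix.trace_mul_eq_of_mul_eq_diagonal {A : Matrix m ι R} {B : Matrix ι m R}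
    {d : ι → R} (h : B * A = diagonal d) : (A * B).trace = ∑ j, d j := by
  rw [trace_mul_comm, h, trace_diagonal]

end

@[to_additive]
theorem Fintype.prod_comp_angle_split {ι M : Type*} [Fintype ι] [CommMonoid M] {θ : ι → ℝ}
    (hθ : ∀ j, θ j ∈ Set.Icc 0 (Real.pi / 2)) (F : ℝ → M) :
    ∏ j, F (θ j) = F 0 ^ (Finset.univ.filter fun j => θ j = 0).card
      * (∏ j ∈ Finset.univ.filter (fun j => 0 < θ j ∧ θ j < Real.pi / 2), F (θ j))
      * F (Real.pi / 2) ^ (Finset.univ.filter fun j => θ j = Real.pi / 2).card := by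
  have hT : (Finset.univ.filter fun j => ¬θ j = 0 ∧ θ j < Real.pi / 2)
      = Finset.univ.filter fun j => 0 < θ j ∧ θ j < Real.pi / 2 :=
    Finset.filter_congr fun j _ => and_congr_left' (hθ j).1.lt_iff_ne'.symm
  have hO : (Finset.univ.filter fun j => ¬θ j = 0 ∧ ¬θ j < Real.pi / 2)
      = Finset.univ.filter fun j => θ j = Real.pi / 2 := by
    refine Finset.filter_congr fun j _ => ⟨fun h => (hθ j).2.antisymm (not_lt.mp h.2), fun h => ?_⟩
    rw [h]
    exact ⟨Real.pi_div_two_pos.ne', lt_irrefl _⟩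
  rw [← Finset.prod_filter_mul_prod_filter_not Finset.univ (fun j => θ j = 0),
    ← Finset.prod_filter_mul_prod_filter_not (Finset.univ.filter fun j => ¬θ j = 0)
      (fun j => θ j < Real.pi / 2), Finset.filter_filter, Finset.filter_filter, hT, hO,
    Finset.prod_eq_pow_card fun j hj => by rw [(Finset.mem_filter.mp hj).2],
    Finset.prod_eq_pow_card (s := Finset.univ.filter fun j => θ j = Real.pi / 2)
      fun j hj => by rw [(Finset.mem_filter.mp hj).2], mul_assoc]

theorem Fintype.card_eq_angle_split {ι : Type*} [Fintype ι] {θ : ι → ℝ}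
    (hθ : ∀ j, θ j ∈ Set.Icc 0 (Real.pi / 2)) :
    Fintype.card ι = (Finset.univ.filter fun j => θ j = 0).card
      + (Finset.univ.filter fun j => 0 < θ j ∧ θ j < Real.pi / 2).card
      + (Finset.univ.filter fun j => θ j = Real.pi / 2).card := by
  simpa only [Finset.sum_const, smul_eq_mul, mul_one, Finset.card_univ] using
    Fintype.sum_comp_angle_split hθ fun _ => (1 : ℕ)

namespace IsPrincipalAngles

variable {n p : ℕ} {S₁ S₂ : Submodule ℝ (Fin n → ℝ)} {θ : Fin p → ℝ} {u v : Fin p → Fin n → ℝ}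

theorem symm (h : IsPrincipalAngles S₁ S₂ θ u v) : IsPrincipalAngles S₂ S₁ θ v u where
  mem_u := h.mem_v
  mem_v := h.mem_u
  norm_u := h.norm_v
  norm_v := h.norm_u
  ortho_u := h.ortho_v
  ortho_v := h.ortho_u
  angle_mem := h.angle_mem
  cos_eq k := by rw [h.cos_eq, dotProduct_comm]
  maximal k v' hv' u' hu' hv'1 hu'1 horth := by
    rw [dotProduct_comm]
    exact h.maximal k u' hu' v' hv' hu'1 hv'1 fun i hi => (horth i hi).symm

theorem dotProduct_u_eq_zero_of_ne (h : IsPrincipalAngles S₁ S₂ θ u v) {i j : Fin p}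
    (hij : i ≠ j) : u i ⬝ᵥ u j = 0 := by
  rcases hij.lt_or_gt with hlt | hgt
  · exact h.ortho_u i j hlt
  · rw [dotProduct_comm]; exact h.ortho_u j i hgt

theorem v_dotProduct_eq_zero (h : IsPrincipalAngles S₁ S₂ θ u v) {k : Fin p} {z : Fin n → ℝ}
    (hz : z ∈ S₁) (horth : ∀ i ≤ k, u i ⬝ᵥ z = 0) : v k ⬝ᵥ z = 0 := by
  refine dotProduct_eq_zero_of_forall_abs_dotProduct_le (h.norm_u k) (horth k le_rfl)
    fun a b hw => ?_
  have hmem : a • u k + b • z ∈ S₁ := S₁.add_mem (S₁.smul_mem a (h.mem_u k)) (S₁.smul_mem b hz)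
  have hperp (i) (hi : i < k) : u i ⬝ᵥ (a • u k + b • z) = 0 ∧ v i ⬝ᵥ v k = 0 := by
    simp [h.ortho_u i k hi, horth i hi.le, h.ortho_v i k hi]
  simpa only [dotProduct_comm (v k), ← h.cos_eq] using
    h.maximal k _ hmem (v k) (h.mem_v k) hw (h.norm_v k) hperp

theorem dotProduct_u_v_of_ne (h : IsPrincipalAngles S₁ S₂ θ u v) {i j : Fin p} (hij : i ≠ j) :
    u i ⬝ᵥ v j = 0 := by
  rcases hij.lt_or_gt with hlt | hgt
  · exact h.symm.v_dotProduct_eq_zero (h.mem_v j)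
      fun l hl => h.symm.dotProduct_u_eq_zero_of_ne (hl.trans_lt hlt).ne
  · rw [dotProduct_comm]
    exact h.v_dotProduct_eq_zero (h.mem_u i)
      fun l hl => h.dotProduct_u_eq_zero_of_ne (hl.trans_lt hgt).ne

theorem sq_dotProduct_eq_cos_sq (h : IsPrincipalAngles S₁ S₂ θ u v) (j : Fin p) :
    (u j ⬝ᵥ v j) ^ 2 = Real.cos (θ j) ^ 2 := by
  rw [h.cos_eq, sq_abs]

theorem sq_dotProduct_eq_one_iff (h : IsPrincipalAngles S₁ S₂ θ u v) (j : Fin p) :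
    (u j ⬝ᵥ v j) ^ 2 = 1 ↔ θ j = 0 := by
  obtain ⟨h0, hπ⟩ := h.angle_mem j
  rw [h.sq_dotProduct_eq_cos_sq, pow_eq_one_iff_of_nonneg
    (Real.cos_nonneg_of_mem_Icc ⟨by linarith, hπ⟩) two_ne_zero,
    Real.cos_eq_one_iff_of_lt_of_lt (by linarith [Real.pi_pos]) (by linarith [Real.pi_pos])]

theorem v_eq_smul_u_of_angle_eq_zero (h : IsPrincipalAngles S₁ S₂ θ u v) {j : Fin p}
    (hj : θ j = 0) : v j = (u j ⬝ᵥ v j) • u j := by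
  have hc := (h.sq_dotProduct_eq_one_iff j).mpr hj
  rw [← sub_eq_zero, ← dotProduct_self_eq_zero]
  simp only [dotProduct_sub, sub_dotProduct, dotProduct_smul, smul_dotProduct, smul_eq_mul,
    h.norm_u, h.norm_v, dotProduct_comm (v j) (u j)]
  linear_combination -hc

theorem mul_transpose_eq_one (h : IsPrincipalAngles S₁ S₂ θ u v) : of u * (of u)ᵀ = 1 := by
  ext i j
  rw [mul_apply', one_apply]
  split_ifs with hij
  · subst hij; exact h.norm_u i
  · exact h.dotProduct_u_eq_zero_of_ne hij

theorem v_mul_u_transpose (h : IsPrincipalAngles S₁ S₂ θ u v) :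
    of v * (of u)ᵀ = diagonal fun j => u j ⬝ᵥ v j := by
  ext i j
  rw [mul_apply', diagonal_apply]
  split_ifs with hij
  · subst hij; exact dotProduct_comm _ _
  · rw [dotProduct_comm]; exact h.dotProduct_u_v_of_ne (Ne.symm hij)

theorem v_mul_u_transpose_mul_diagonal (h : IsPrincipalAngles S₁ S₂ θ u v) :
    of v * ((of u)ᵀ * diagonal fun j => u j ⬝ᵥ v j) = diagonal fun j => Real.cos (θ j) ^ 2 := by
  rw [← Matrix.mul_assoc, h.v_mul_u_transpose, diagonal_mul_diagonal]
  simp only [← sq, h.sq_dotProduct_eq_cos_sq]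

theorem span_v (h : IsPrincipalAngles S₁ S₂ θ u v) (hdim : Module.finrank ℝ S₂ = p) :
    Submodule.span ℝ (Set.range (of v).row) = S₂ :=
  Submodule.eq_of_le_of_finrank_le (Submodule.span_le.mpr (Set.range_subset_iff.mpr h.mem_v))
    (by rw [hdim, finrank_span_eq_card
      (linearIndependent_row_of_mul_eq_one h.symm.mul_transpose_eq_one), Fintype.card_fin])

theorem proj_mulVec_v (h : IsPrincipalAngles S₁ S₂ θ u v) {P : Matrix (Fin n) (Fin n) ℝ}
    (hP : P.IsOrthogonalProjection S₁) (j : Fin p) : P *ᵥ v j = (u j ⬝ᵥ v j) • u j := by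
  set w := P *ᵥ v j - (u j ⬝ᵥ v j) • u j
  have hwS : w ∈ S₁ := S₁.sub_mem (hP.mulVec_mem _) (S₁.smul_mem _ (h.mem_u j))
  have hwu (i : Fin p) : u i ⬝ᵥ w = 0 := by
    rw [dotProduct_sub, hP.isSymm.dotProduct_mulVec_comm, hP.mulVec_eq_self _ (h.mem_u i),
      dotProduct_smul, smul_eq_mul]
    rcases eq_or_ne i j with rfl | hij
    · rw [h.norm_u, mul_one, sub_self]
    · rw [h.dotProduct_u_v_of_ne hij, h.dotProduct_u_eq_zero_of_ne hij, mul_zero, sub_self]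
  have hwv : v j ⬝ᵥ w = 0 := h.v_dotProduct_eq_zero hwS fun i _ => hwu i
  have hww : w ⬝ᵥ w = 0 := by
    calc w ⬝ᵥ w = w ⬝ᵥ (P *ᵥ v j) - (u j ⬝ᵥ v j) * (u j ⬝ᵥ w) := by
          rw [dotProduct_sub, dotProduct_smul, smul_eq_mul, dotProduct_comm w (u j)]
      _ = 0 := by
          rw [hP.isSymm.dotProduct_mulVec_comm, hP.mulVec_eq_self w hwS, hwu, mul_zero,
            sub_zero, dotProduct_comm, hwv]
  rw [← sub_eq_zero]
  exact dotProduct_self_eq_zero.mp hww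

theorem proj_mul_v_transpose (h : IsPrincipalAngles S₁ S₂ θ u v)
    {P : Matrix (Fin n) (Fin n) ℝ} (hP : P.IsOrthogonalProjection S₁) :
    P * (of v)ᵀ = (of u)ᵀ * diagonal fun j => u j ⬝ᵥ v j := by
  ext i j
  rw [mul_diagonal, transpose_apply, of_apply, mul_comm]
  simpa [mul_apply, mulVec, dotProduct, mul_comm] using congrFun (h.proj_mulVec_v hP j) i

theorem proj_mul_proj (h : IsPrincipalAngles S₁ S₂ θ u v) {P₁ P₂ : Matrix (Fin n) (Fin n) ℝ}
    (hP₁ : P₁.IsOrthogonalProjection S₁) (hP₂ : P₂.IsOrthogonalProjection S₂)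
    (hdim : Module.finrank ℝ S₂ = p) :
    P₁ * P₂ = (of u)ᵀ * (diagonal fun j => u j ⬝ᵥ v j) * of v := by
  rw [hP₂.eq_transpose_mul_self h.symm.mul_transpose_eq_one (h.span_v hdim), ← Matrix.mul_assoc,
    h.proj_mul_v_transpose hP₁]

theorem inf_eq_span (h : IsPrincipalAngles S₁ S₂ θ u v) {P₁ P₂ : Matrix (Fin n) (Fin n) ℝ}
    (hP₁ : P₁.IsOrthogonalProjection S₁) (hP₂ : P₂.IsOrthogonalProjection S₂)
    (hdim : Module.finrank ℝ S₂ = p) :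
    S₁ ⊓ S₂ = Submodule.span ℝ (Set.range fun j : {j // θ j = 0} => v j) := by
  refine le_antisymm (fun x hx => ?_) (Submodule.span_le.mpr ?_)
  · obtain ⟨hx₁, hx₂⟩ := Submodule.mem_inf.mp hx
    set c := fun j => u j ⬝ᵥ v j
    have hx₂' : x = (of v)ᵀ *ᵥ (of v *ᵥ x) := by
      rw [mulVec_mulVec, ← hP₂.eq_transpose_mul_self h.symm.mul_transpose_eq_one (h.span_v hdim),
        hP₂.mulVec_eq_self x hx₂]
    have hx₁' : x = (of u)ᵀ *ᵥ (diagonal c *ᵥ (of v *ᵥ x)) := by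
      rw [mulVec_mulVec, ← h.proj_mul_v_transpose hP₁, ← mulVec_mulVec, ← hx₂',
        hP₁.mulVec_eq_self x hx₁]
    have hcoord (j : Fin p) : θ j ≠ 0 → (of v *ᵥ x) j = 0 := by
      have hy : of v *ᵥ x = diagonal c *ᵥ (diagonal c *ᵥ (of v *ᵥ x)) := by
        conv_lhs => rw [hx₁']
        rw [mulVec_mulVec, h.v_mul_u_transpose]
      have := congrFun hy j
      rw [mulVec_diagonal, mulVec_diagonal, ← mul_assoc, ← sq] at this
      intro hj
      have hc : c j ^ 2 ≠ 1 := mt (h.sq_dotProduct_eq_one_iff j).mp hj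
      contrapose! hc
      exact (mul_eq_right₀ hc).mp this.symm
    rw [hx₂', mulVec_transpose, vecMul_eq_sum]
    refine Submodule.sum_mem _ fun j _ => ?_
    by_cases hj : θ j = 0
    · exact Submodule.smul_mem _ _ (Submodule.subset_span ⟨⟨j, hj⟩, rfl⟩)
    · rw [hcoord j hj, zero_smul]
      exact Submodule.zero_mem _
  · rintro _ ⟨⟨j, hj⟩, rfl⟩
    refine Submodule.mem_inf.mpr ⟨?_, h.mem_v j⟩
    change v j ∈ S₁
    rw [h.v_eq_smul_u_of_angle_eq_zero hj]
    exact S₁.smul_mem _ (h.mem_u j)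

theorem finrank_inf (h : IsPrincipalAngles S₁ S₂ θ u v) {P₁ P₂ : Matrix (Fin n) (Fin n) ℝ}
    (hP₁ : P₁.IsOrthogonalProjection S₁) (hP₂ : P₂.IsOrthogonalProjection S₂)
    (hdim : Module.finrank ℝ S₂ = p) :
    Module.finrank ℝ ↥(S₁ ⊓ S₂) = (Finset.univ.filter fun j => θ j = 0).card := by
  have hli : LinearIndependent ℝ fun j : {j // θ j = 0} => v j :=
    (linearIndependent_row_of_mul_eq_one h.symm.mul_transpose_eq_one).comp _ Subtype.val_injective
  rw [h.inf_eq_span hP₁ hP₂ hdim, finrank_span_eq_card hli, Fintype.card_subtype]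

end IsPrincipalAngles

theorem eig_product_of_projections_general {n p₂ : ℕ} (S₁ S₂ : Submodule ℝ (Fin n → ℝ))
    (P₁ P₂ : Matrix (Fin n) (Fin n) ℝ)
    (hdim₂ : Module.finrank ℝ S₂ = p₂)
    (h₁s : P₁.IsSymm)
    (h₂s : P₂.IsSymm)
    (h₁mem : ∀ x, P₁ *ᵥ x ∈ S₁) (h₁fix : ∀ x ∈ S₁, P₁ *ᵥ x = x)
    (h₂mem : ∀ x, P₂ *ᵥ x ∈ S₂) (h₂fix : ∀ x ∈ S₂, P₂ *ᵥ x = x)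
    (θ : Fin p₂ → ℝ) (u v : Fin p₂ → (Fin n → ℝ))
    (hθ : IsPrincipalAngles S₁ S₂ θ u v) :
    (P₁ * P₂).charpoly
        = (Polynomial.X - 1) ^ (Module.finrank ℝ ↥(S₁ ⊓ S₂))
          * (∏ j ∈ Finset.univ.filter (fun j => 0 < θ j ∧ θ j < Real.pi / 2),
              (Polynomial.X - Polynomial.C (Real.cos (θ j) ^ 2)))
          * Polynomial.X ^ (n - Module.finrank ℝ ↥(S₁ ⊓ S₂)
              - (Finset.univ.filter (fun j => 0 < θ j ∧ θ j < Real.pi / 2)).card) ∧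
    (P₁ * P₂).trace
        = (Module.finrank ℝ ↥(S₁ ⊓ S₂) : ℝ)
          + ∑ j ∈ Finset.univ.filter (fun j => 0 < θ j ∧ θ j < Real.pi / 2),
              Real.cos (θ j) ^ 2 := by
  have hP₁ : P₁.IsOrthogonalProjection S₁ := ⟨h₁s, h₁mem, h₁fix⟩
  have hP₂ : P₂.IsOrthogonalProjection S₂ := ⟨h₂s, h₂mem, h₂fix⟩
  have hle : p₂ ≤ n := hdim₂ ▸ (Submodule.finrank_le S₂).trans_eq (Module.finrank_fin_fun ℝ)
  have hcard := Fintype.card_eq_angle_split hθ.angle_mem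
  rw [Fintype.card_fin] at hcard
  rw [hθ.proj_mul_proj hP₁ hP₂ hdim₂, hθ.finrank_inf hP₁ hP₂ hdim₂]
  constructor
  · rw [charpoly_mul_eq_of_mul_eq_diagonal hθ.v_mul_u_transpose_mul_diagonal (by simpa using hle),
      Fintype.prod_comp_angle_split hθ.angle_mem fun t => X - C (Real.cos t ^ 2)]
    simp only [Real.cos_zero, Real.cos_pi_div_two, Fintype.card_fin, one_pow, map_one,
      ne_eq, OfNat.ofNat_ne_zero, not_false_eq_true, zero_pow, map_zero, sub_zero]
    rw [show n - _ - _ = n - p₂ + (Finset.univ.filter fun j => θ j = Real.pi / 2).card by omega,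
      pow_add]
    ring
  · rw [trace_mul_eq_of_mul_eq_diagonal hθ.v_mul_u_transpose_mul_diagonal,
      Fintype.sum_comp_angle_split hθ.angle_mem fun t => Real.cos t ^ 2]
    simp

/-- Eigenstructure of the product of two orthogonal projections: the eigenvalues of `P₁P₂`
are 1 with multiplicity `s = dim (S₁ ⊓ S₂)`, the squared cosines of the principal angles
lying strictly in `(0, π/2)`, and 0 with multiplicity `n − s − r`; consequently
`tr(P₁P₂) = s + Σ cos²θ` over those angles. -/
theorem eig_product_of_projections {n p₁ p₂ : ℕ} (S₁ S₂ : Submodule ℝ (Fin n → ℝ))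
    (P₁ P₂ : Matrix (Fin n) (Fin n) ℝ)
    (hdim₁ : Module.finrank ℝ S₁ = p₁) (hdim₂ : Module.finrank ℝ S₂ = p₂)
    (hp : p₂ ≤ p₁) (hp₂ : 1 ≤ p₂)
    (h₁s : P₁.IsSymm) (h₁i : P₁ * P₁ = P₁)
    (h₂s : P₂.IsSymm) (h₂i : P₂ * P₂ = P₂)
    (h₁mem : ∀ x, P₁ *ᵥ x ∈ S₁) (h₁fix : ∀ x ∈ S₁, P₁ *ᵥ x = x)
    (h₂mem : ∀ x, P₂ *ᵥ x ∈ S₂) (h₂fix : ∀ x ∈ S₂, P₂ *ᵥ x = x)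
    (θ : Fin p₂ → ℝ) (u v : Fin p₂ → (Fin n → ℝ))
    (hθ : IsPrincipalAngles S₁ S₂ θ u v) :
    (P₁ * P₂).charpoly
        = (Polynomial.X - 1) ^ (Module.finrank ℝ ↥(S₁ ⊓ S₂))
          * (∏ j ∈ Finset.univ.filter (fun j => 0 < θ j ∧ θ j < Real.pi / 2),
              (Polynomial.X - Polynomial.C (Real.cos (θ j) ^ 2)))
          * Polynomial.X ^ (n - Module.finrank ℝ ↥(S₁ ⊓ S₂)
              - (Finset.univ.filter (fun j => 0 < θ j ∧ θ j < Real.pi / 2)).card) ∧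
    (P₁ * P₂).trace
        = (Module.finrank ℝ ↥(S₁ ⊓ S₂) : ℝ)
          + ∑ j ∈ Finset.univ.filter (fun j => 0 < θ j ∧ θ j < Real.pi / 2),
              Real.cos (θ j) ^ 2 :=
  eig_product_of_projections_general S₁ S₂ P₁ P₂ hdim₂ h₁s h₂s h₁mem h₁fix h₂mem h₂fix θ u v hθ
end

section
/- Under y ~ N(μ*, σ*²I_n) and equal known variances σ₁ = σ₂ = σ, the expected log Bayes factor for the two Gaussian linear models with shrinkage smoothers H_i = κP_i equals (KL₂ − KL₁)/(2 − κ) + ((p₁ − p₂)/2)·(log(1−κ) + κσ*²/σ²), where KL_i = KL(N(μ*, σ*²I_n) ‖ N(H_iμ*, σ²I_n)). -/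
/-!
Under `y ~ N(μ*, σ*²I)` the coordinates of `y` are independent one-dimensional Gaussians, so a
quadratic polynomial has expectation `E[c + bᵀy + yᵀAy] = c + bᵀμ* + σ*² tr A + μ*ᵀAμ*`.
Applied to `log B₁₂` (with `tr P_i = p_i`) this computes the left-hand side, and applied to the log
density ratio it gives the closed form of the KL divergence between isotropic Gaussians. As `P_i`
is a symmetric idempotent, `‖μ* − κP_iμ*‖² = ‖μ*‖² − κ(2 − κ)μ*ᵀP_iμ*`, hence
`KL₂ − KL₁ = κ(2 − κ)(μ*ᵀP₁μ* − μ*ᵀP₂μ*)/(2σ²)`: exactly `2 − κ` times the mean-dependent part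
of `E log B₁₂`.
-/

open MeasureTheory Matrix Real

/-- Density of the multivariate normal distribution `N(μ, S)`. -/
noncomputable def gaussianPDF {ι : Type*} [Fintype ι] [DecidableEq ι] (μ : ι → ℝ)
    (S : Matrix ι ι ℝ) (y : ι → ℝ) : ℝ :=
  (Real.sqrt ((2 * Real.pi) ^ (Fintype.card ι) * S.det))⁻¹ *
    Real.exp (-(1/2 : ℝ) * ((y - μ) ⬝ᵥ (S⁻¹ *ᵥ (y - μ))))

/-- Expectation of `f(y)` for `y ~ N(μ, S)`. -/
noncomputable def gExp {ι : Type*} [Fintype ι] [DecidableEq ι] (μ : ι → ℝ)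
    (S : Matrix ι ι ℝ) (f : (ι → ℝ) → ℝ) : ℝ :=
  ∫ y : ι → ℝ, f y * gaussianPDF μ S y


/-- Kullback–Leibler divergence KL(N(μ₁,S₁) ‖ N(μ₂,S₂)) between multivariate normals. -/
noncomputable def klGaussian {ι : Type*} [Fintype ι] [DecidableEq ι] (μ₁ : ι → ℝ)
    (S₁ : Matrix ι ι ℝ) (μ₂ : ι → ℝ) (S₂ : Matrix ι ι ℝ) : ℝ :=
  ∫ y : ι → ℝ, Real.log (gaussianPDF μ₁ S₁ y / gaussianPDF μ₂ S₂ y) * gaussianPDF μ₁ S₁ y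

open ProbabilityTheory (gaussianReal gaussianPDFReal)
open scoped ENNReal NNReal

theorem MeasureTheory.Measure.pi_withDensity_ofReal {ι : Type*} [Fintype ι] {X : ι → Type*}
    [∀ i, MeasurableSpace (X i)] {μ : ∀ i, Measure (X i)} [∀ i, SigmaFinite (μ i)]
    {f : ∀ i, X i → ℝ} (hf : ∀ i, Integrable (f i) (μ i)) (hf₀ : ∀ i, 0 ≤ f i) :
    Measure.pi (fun i => (μ i).withDensity fun x => ENNReal.ofReal (f i x))
      = (Measure.pi μ).withDensity fun y => ENNReal.ofReal (∏ i, f i (y i)) := by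
  have := fun i => isFiniteMeasure_withDensity_ofReal (hf i).2
  refine Measure.pi_eq fun s hs => ?_
  rw [withDensity_apply _ (MeasurableSet.univ_pi hs), Measure.restrict_pi_pi,
    ← ofReal_integral_eq_lintegral_ofReal
      (Integrable.fintype_prod_dep fun i => (hf i).restrict)
      (ae_of_all _ fun y => Finset.prod_nonneg fun i _ => hf₀ i (y i)),
    integral_fintype_prod_eq_prod,
    ENNReal.ofReal_prod_of_nonneg fun i _ => integral_nonneg (hf₀ i)]
  refine Finset.prod_congr rfl fun i _ => ?_
  rw [withDensity_apply _ (hs i),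
    ofReal_integral_eq_lintegral_ofReal (hf i).restrict (ae_of_all _ (hf₀ i))]

section isotropicGaussian

variable {ι : Type*} [Fintype ι]

noncomputable abbrev isotropicGaussian (μ : ι → ℝ) (v : ℝ≥0) : Measure (ι → ℝ) :=
  Measure.pi fun i => gaussianReal (μ i) v

lemma isotropicGaussian_eq_withDensity {v : ℝ≥0} (hv : v ≠ 0) (μ : ι → ℝ) :
    isotropicGaussian μ v
      = volume.withDensity fun y => ENNReal.ofReal (∏ i, gaussianPDFReal (μ i) v (y i)) := by
  simp only [isotropicGaussian, ProbabilityTheory.gaussianReal_of_var_ne_zero _ hv,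
    ProbabilityTheory.gaussianPDF_def]
  exact Measure.pi_withDensity_ofReal (fun i => ProbabilityTheory.integrable_gaussianPDFReal _ _)
    (fun i => ProbabilityTheory.gaussianPDFReal_nonneg _ _)

variable {μ : ι → ℝ} {v : ℝ≥0}

lemma memLp_eval_isotropicGaussian (i : ι) {p : ℝ≥0∞} (hp : p ≠ ∞) :
    MemLp (fun y => y i) p (isotropicGaussian μ v) :=
  (ProbabilityTheory.memLp_id_gaussianReal' p hp).comp_measurePreserving
    (measurePreserving_eval _ i)

lemma integrable_eval_mul_eval_isotropicGaussian (i j : ι) :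
    Integrable (fun y => y i * y j) (isotropicGaussian μ v) :=
  (memLp_eval_isotropicGaussian i (p := 2) (by simp)).integrable_mul
    (memLp_eval_isotropicGaussian j (p := 2) (by simp))

lemma integral_eval_isotropicGaussian (i : ι) : ∫ y, y i ∂isotropicGaussian μ v = μ i := by
  rw [integral_eval, ProbabilityTheory.integral_id_gaussianReal]

lemma integral_eval_mul_eval_isotropicGaussian [DecidableEq ι] (i j : ι) :
    ∫ y, y i * y j ∂isotropicGaussian μ v = (if i = j then (v : ℝ) else 0) + μ i * μ j := by
  by_cases hij : i = j
  · subst hij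
    have hvar := ProbabilityTheory.variance_eq_sub
      (ProbabilityTheory.memLp_id_gaussianReal (μ := μ i) (v := v) 2)
    simp only [ProbabilityTheory.variance_id_gaussianReal, Pi.pow_apply, id,
      ProbabilityTheory.integral_id_gaussianReal] at hvar
    rw [if_pos rfl, integral_comp_eval (f := fun x => x * x) (by fun_prop)]
    simp only [← sq]
    linarith
  · have hindep : ProbabilityTheory.IndepFun (fun y : ι → ℝ => y i) (fun y => y j)
        (isotropicGaussian μ v) :=
      (ProbabilityTheory.iIndepFun_pi (X := fun _ => id) fun _ => aemeasurable_id).indepFun hij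
    rw [if_neg hij, zero_add, ← integral_eval_isotropicGaussian (μ := μ) (v := v) i,
      ← integral_eval_isotropicGaussian (μ := μ) (v := v) j]
    exact hindep.integral_mul_eq_mul_integral
      (memLp_eval_isotropicGaussian i ENNReal.one_ne_top).1
      (memLp_eval_isotropicGaussian j ENNReal.one_ne_top).1

lemma dotProduct_mulVec_eq_sum (A : Matrix ι ι ℝ) (x y : ι → ℝ) :
    x ⬝ᵥ (A *ᵥ y) = ∑ i, ∑ j, A i j * (x i * y j) := by
  simp only [dotProduct, mulVec, Finset.mul_sum]
  exact Finset.sum_congr rfl fun i _ => Finset.sum_congr rfl fun j _ => by ring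

lemma integral_quadratic_isotropicGaussian [DecidableEq ι] (c : ℝ) (b : ι → ℝ)
    (A : Matrix ι ι ℝ) :
    ∫ y, (c + b ⬝ᵥ y + y ⬝ᵥ (A *ᵥ y)) ∂isotropicGaussian μ v
      = c + b ⬝ᵥ μ + v * A.trace + μ ⬝ᵥ (A *ᵥ μ) := by
  have hlin : ∀ i, Integrable (fun y => b i * y i) (isotropicGaussian μ v) := fun i =>
    ((memLp_eval_isotropicGaussian i ENNReal.one_ne_top).integrable le_rfl).const_mul _
  have hquad : ∀ i j, Integrable (fun y => A i j * (y i * y j)) (isotropicGaussian μ v) :=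
    fun i j => (integrable_eval_mul_eval_isotropicGaussian i j).const_mul _
  have hlin' : Integrable (fun y => b ⬝ᵥ y) (isotropicGaussian μ v) := by
    simpa only [dotProduct] using integrable_finsetSum _ fun i _ => hlin i
  have hquad' : Integrable (fun y => y ⬝ᵥ (A *ᵥ y)) (isotropicGaussian μ v) := by
    simpa only [dotProduct_mulVec_eq_sum] using
      integrable_finsetSum _ fun i _ => integrable_finsetSum _ fun j _ => hquad i j
  have hmean_lin : ∫ y, b ⬝ᵥ y ∂isotropicGaussian μ v = b ⬝ᵥ μ := by
    simp only [dotProduct]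
    rw [integral_finsetSum _ fun i _ => hlin i]
    simp only [integral_const_mul, integral_eval_isotropicGaussian]
  have hmean_quad : ∫ y, y ⬝ᵥ (A *ᵥ y) ∂isotropicGaussian μ v = v * A.trace + μ ⬝ᵥ (A *ᵥ μ) := by
    simp only [dotProduct_mulVec_eq_sum]
    rw [integral_finsetSum _ fun i _ => integrable_finsetSum _ fun j _ => hquad i j]
    simp only [integral_finsetSum _ fun j _ => hquad _ j, integral_const_mul,
      integral_eval_mul_eval_isotropicGaussian, mul_add, Finset.sum_add_distrib, mul_ite, mul_zero,
      Finset.sum_ite_eq, Finset.mem_univ, if_true, trace, diag, Finset.mul_sum]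
    exact congrArg₂ _ (Finset.sum_congr rfl fun i _ => mul_comm _ _) rfl
  rw [integral_add (f := fun y => c + b ⬝ᵥ y) ((integrable_const c).add hlin') hquad',
    integral_add (integrable_const c) hlin', integral_const, probReal_univ, one_smul, hmean_lin,
    hmean_quad, add_assoc (c + _)]

end isotropicGaussian

section gaussianPDF

variable {ι : Type*} [Fintype ι] [DecidableEq ι] {s t : ℝ}

lemma gaussianPDF_smul_one (hs : 0 < s) (μ y : ι → ℝ) :
    gaussianPDF μ (s • (1 : Matrix ι ι ℝ)) y
      = (√(2 * π * s) ^ Fintype.card ι)⁻¹ * exp (-((y - μ) ⬝ᵥ (y - μ)) / (2 * s)) := by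
  set n := Fintype.card ι
  have hinv : (s • (1 : Matrix ι ι ℝ))⁻¹ = s⁻¹ • 1 :=
    inv_eq_left_inv (by rw [smul_mul_smul, one_mul, inv_mul_cancel₀ hs.ne', one_smul])
  have hsqrt : √((2 * π) ^ n * s ^ n) = √(2 * π * s) ^ n := by
    rw [← mul_pow, ← Real.sqrt_sq (pow_nonneg (Real.sqrt_nonneg _) _), ← pow_mul, mul_comm n 2,
      pow_mul, Real.sq_sqrt (by positivity)]
  rw [gaussianPDF, hinv, det_smul, det_one, mul_one, hsqrt, smul_mulVec, one_mulVec,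
    dotProduct_smul, smul_eq_mul]
  field_simp

lemma gaussianPDF_smul_one_pos (hs : 0 < s) (μ y : ι → ℝ) :
    0 < gaussianPDF μ (s • (1 : Matrix ι ι ℝ)) y := by
  have := Real.sqrt_pos.2 (by positivity : 0 < 2 * π * s)
  rw [gaussianPDF_smul_one hs]
  positivity

lemma log_gaussianPDF_smul_one (hs : 0 < s) (μ y : ι → ℝ) :
    log (gaussianPDF μ (s • (1 : Matrix ι ι ℝ)) y)
      = -(Fintype.card ι / 2) * log (2 * π * s) - (y - μ) ⬝ᵥ (y - μ) / (2 * s) := by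
  have := Real.sqrt_pos.2 (by positivity : 0 < 2 * π * s)
  rw [gaussianPDF_smul_one hs, log_mul (by positivity) (exp_ne_zero _), log_exp, log_inv, log_pow,
    log_sqrt (by positivity)]
  ring

lemma gaussianPDF_smul_one_eq_prod {v : ℝ≥0} (hv : v ≠ 0) (μ y : ι → ℝ) :
    gaussianPDF μ ((v : ℝ) • (1 : Matrix ι ι ℝ)) y = ∏ i, gaussianPDFReal (μ i) v (y i) := by
  simp only [gaussianPDF_smul_one (NNReal.coe_pos.2 (pos_iff_ne_zero.2 hv)), gaussianPDFReal,
    Finset.prod_mul_distrib, Finset.prod_const, Finset.card_univ, inv_pow, ← Real.exp_sum,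
    dotProduct, Finset.sum_neg_distrib, neg_div, sq, Finset.sum_div]
  rfl

lemma gExp_smul_one_eq_integral (hs : 0 < s) (μ : ι → ℝ) (f : (ι → ℝ) → ℝ) :
    gExp μ (s • 1) f = ∫ y, f y ∂isotropicGaussian μ s.toNNReal := by
  lift s to ℝ≥0 using hs.le
  have hs' : s ≠ 0 := by exact_mod_cast hs.ne'
  simp only [gExp, gaussianPDF_smul_one_eq_prod hs', Real.toNNReal_coe,
    isotropicGaussian_eq_withDensity hs']
  rw [integral_withDensity_eq_integral_toReal_smul (by fun_prop) (ae_of_all _ fun _ => by simp)]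
  refine integral_congr_ae (ae_of_all _ fun y => ?_)
  dsimp only
  rw [ENNReal.toReal_ofReal (Finset.prod_nonneg fun i _ =>
    ProbabilityTheory.gaussianPDFReal_nonneg _ _ _), smul_eq_mul, mul_comm]

lemma gExp_smul_one_quadratic (hs : 0 < s) (μ : ι → ℝ) (c : ℝ) (b : ι → ℝ) (A : Matrix ι ι ℝ) :
    gExp μ (s • 1) (fun y => c + b ⬝ᵥ y + y ⬝ᵥ (A *ᵥ y))
      = c + b ⬝ᵥ μ + s * A.trace + μ ⬝ᵥ (A *ᵥ μ) := by
  rw [gExp_smul_one_eq_integral hs, integral_quadratic_isotropicGaussian,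
    Real.coe_toNNReal _ hs.le]

lemma klGaussian_smul_one (hs : 0 < s) (ht : 0 < t) (μ m : ι → ℝ) :
    klGaussian μ (s • 1) m (t • 1)
      = Fintype.card ι / 2 * (log (t / s) + s / t - 1) + (μ - m) ⬝ᵥ (μ - m) / (2 * t) := by
  have hlog : (fun y => log (gaussianPDF μ (s • 1) y / gaussianPDF m (t • 1) y))
      = fun y => (Fintype.card ι / 2 * log (t / s) + m ⬝ᵥ m / (2 * t) - μ ⬝ᵥ μ / (2 * s))
        + (s⁻¹ • μ - t⁻¹ • m) ⬝ᵥ y + y ⬝ᵥ ((((2 * t)⁻¹ - (2 * s)⁻¹) • 1 : Matrix ι ι ℝ) *ᵥ y) := by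
    funext y
    rw [log_div (gaussianPDF_smul_one_pos hs μ y).ne' (gaussianPDF_smul_one_pos ht m y).ne',
      log_gaussianPDF_smul_one hs, log_gaussianPDF_smul_one ht,
      log_div ht.ne' hs.ne', log_mul (by positivity) ht.ne', log_mul (by positivity) hs.ne']
    simp only [sub_dotProduct, dotProduct_sub, smul_dotProduct, dotProduct_smul, smul_mulVec,
      one_mulVec, smul_eq_mul, dotProduct_comm y μ, dotProduct_comm y m]
    field_simp
    ring
  rw [klGaussian, ← gExp, hlog, gExp_smul_one_quadratic hs]
  simp only [sub_dotProduct, dotProduct_sub, smul_dotProduct, dotProduct_smul, smul_mulVec,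
    one_mulVec, smul_eq_mul, dotProduct_comm m μ, trace_smul, trace_one]
  field_simp
  ring

end gaussianPDF

lemma Matrix.isUnit_of_rank_eq_card {n K : Type*} [Fintype n] [DecidableEq n] [Field K]
    {A : Matrix n n K} (h : A.rank = Fintype.card n) : IsUnit A := by
  refine mulVec_surjective_iff_isUnit.1 (LinearMap.range_eq_top (f := A.mulVecLin) |>.1 ?_)
  apply Submodule.eq_top_of_finrank_eq
  rw [Module.finrank_fintype_fun_eq_card, ← h]
  rfl

section hatMatrix

variable {m p R K : Type*} [Fintype m] [Fintype p] [DecidableEq p]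

noncomputable def hatMatrix [CommRing R] (X : Matrix m p R) : Matrix m m R := X * (Xᵀ * X)⁻¹ * Xᵀ

lemma transpose_hatMatrix [CommRing R] (X : Matrix m p R) : (hatMatrix X)ᵀ = hatMatrix X := by
  rw [hatMatrix, transpose_mul, transpose_mul, transpose_transpose, transpose_nonsing_inv,
    transpose_mul, transpose_transpose, Matrix.mul_assoc]

variable [Field K] [LinearOrder K] [IsStrictOrderedRing K]

lemma isUnit_transpose_mul_self {X : Matrix m p K} (hX : X.rank = Fintype.card p) :
    IsUnit (Xᵀ * X) :=
  isUnit_of_rank_eq_card (by rw [rank_transpose_mul_self, hX])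

lemma trace_hatMatrix {X : Matrix m p K} (hX : X.rank = Fintype.card p) :
    (hatMatrix X).trace = Fintype.card p := by
  rw [hatMatrix, trace_mul_comm, ← Matrix.mul_assoc,
    mul_nonsing_inv _ ((isUnit_iff_isUnit_det _).1 (isUnit_transpose_mul_self hX)), trace_one]

lemma isIdempotentElem_hatMatrix {X : Matrix m p K} (hX : X.rank = Fintype.card p) :
    IsIdempotentElem (hatMatrix X) := by
  have h := nonsing_inv_mul _ ((isUnit_iff_isUnit_det _).1 (isUnit_transpose_mul_self hX))
  calc hatMatrix X * hatMatrix X = X * ((Xᵀ * X)⁻¹ * (Xᵀ * X)) * (Xᵀ * X)⁻¹ * Xᵀ := by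
        simp only [hatMatrix, Matrix.mul_assoc]
    _ = hatMatrix X := by rw [h, Matrix.mul_one, hatMatrix]

end hatMatrix

lemma dotProduct_sub_smul_mulVec_self {n R : Type*} [Fintype n] [CommRing R] {P : Matrix n n R}
    (hPt : Pᵀ = P) (hP : IsIdempotentElem P) (κ : R) (v : n → R) :
    (v - (κ • P) *ᵥ v) ⬝ᵥ (v - (κ • P) *ᵥ v) = v ⬝ᵥ v - κ * (2 - κ) * (v ⬝ᵥ (P *ᵥ v)) := by
  have hPP : (P *ᵥ v) ⬝ᵥ (P *ᵥ v) = v ⬝ᵥ (P *ᵥ v) := by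
    rw [dotProduct_mulVec, vecMul_mulVec, ← mulVec_transpose]
    simp only [hPt, hP.eq, dotProduct_comm]
  simp only [smul_mulVec, sub_dotProduct, dotProduct_sub, smul_dotProduct, dotProduct_smul,
    smul_eq_mul, hPP, dotProduct_comm (P *ᵥ v) v]
  ring

/-- Expected log Bayes factor for two Gaussian linear regression models with equal known
variance σ², under the data-generating process y ~ N(μ*, σ*²Iₙ):
E(log B₁₂(y)) = (KL₂ − KL₁)/(2 − κ) + ((p₁ − p₂)/2)(log(1 − κ) + κσ*²/σ²),
where KLᵢ = KL(N(μ*, σ*²Iₙ) ‖ N(Hᵢμ*, σ²Iₙ)). -/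
theorem mean_log_bayes_factor {n p₁ p₂ : ℕ} (X₁ : Matrix (Fin n) (Fin p₁) ℝ)
    (X₂ : Matrix (Fin n) (Fin p₂) ℝ) (hX₁ : X₁.rank = p₁) (hX₂ : X₂.rank = p₂)
    (κ : ℝ) (hκ : κ ∈ Set.Ioo (0 : ℝ) 1) (σ σstar : ℝ) (hσ : 0 < σ) (hσstar : 0 < σstar)
    (μstar : Fin n → ℝ) (P₁ P₂ H₁ H₂ : Matrix (Fin n) (Fin n) ℝ)
    (hP₁ : P₁ = X₁ * (X₁ᵀ * X₁)⁻¹ * X₁ᵀ) (hP₂ : P₂ = X₂ * (X₂ᵀ * X₂)⁻¹ * X₂ᵀ)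
    (hH₁ : H₁ = κ • P₁) (hH₂ : H₂ = κ • P₂)
    (logB : (Fin n → ℝ) → ℝ)
    (hlogB : ∀ y, logB y = ((p₁ : ℝ) - p₂) / 2 * Real.log (1 - κ)
        + (1 / (2 * σ ^ 2)) * (y ⬝ᵥ ((H₁ - H₂) *ᵥ y))) :
    gExp μstar (σstar ^ 2 • 1) logB
    = (klGaussian μstar (σstar ^ 2 • 1) (H₂ *ᵥ μstar) (σ ^ 2 • 1)
        - klGaussian μstar (σstar ^ 2 • 1) (H₁ *ᵥ μstar) (σ ^ 2 • 1)) / (2 - κ)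
      + ((p₁ : ℝ) - p₂) / 2 * (Real.log (1 - κ) + κ * σstar ^ 2 / σ ^ 2) := by
  have hX₁ : X₁.rank = Fintype.card (Fin p₁) := hX₁.trans (Fintype.card_fin p₁).symm
  have hX₂ : X₂.rank = Fintype.card (Fin p₂) := hX₂.trans (Fintype.card_fin p₂).symm
  have hlogB : logB = fun y => ((p₁ : ℝ) - p₂) / 2 * Real.log (1 - κ) + 0 ⬝ᵥ y
      + y ⬝ᵥ (((1 / (2 * σ ^ 2)) • (H₁ - H₂)) *ᵥ y) := by
    funext y
    rw [hlogB, zero_dotProduct, add_zero, smul_mulVec, dotProduct_smul, smul_eq_mul]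
  have h2κ : 2 - κ ≠ 0 := by linarith [hκ.2]
  obtain rfl : P₁ = hatMatrix X₁ := hP₁
  obtain rfl : P₂ = hatMatrix X₂ := hP₂
  subst hH₁ hH₂
  rw [hlogB, gExp_smul_one_quadratic (by positivity),
    klGaussian_smul_one (by positivity) (by positivity),
    klGaussian_smul_one (by positivity) (by positivity),
    dotProduct_sub_smul_mulVec_self (transpose_hatMatrix X₁) (isIdempotentElem_hatMatrix hX₁),
    dotProduct_sub_smul_mulVec_self (transpose_hatMatrix X₂) (isIdempotentElem_hatMatrix hX₂),
    trace_smul, trace_sub, trace_smul, trace_smul, trace_hatMatrix hX₁, trace_hatMatrix hX₂]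
  simp only [sub_mulVec, smul_mulVec, dotProduct_sub, dotProduct_smul, smul_eq_mul,
    zero_dotProduct, Fintype.card_fin]
  field_simp
  ring
end
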